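/- Let u : ℝ³\{0} → ℝ be twice continuously differentiable and positively homogeneous of degree 0, i.e. u(t x) = u(x) for all t > 0 and x ≠ 0. Then for every x with |x| = 1 one has ∑_{i,j=1}^{3} (∂²u/∂x_i∂x_j (x))² ≥ 2 |∇u(x)|². -/

import Mathlib

open MeasureTheory Real Set Metric Filter

noncomputable section

/-- Three-dimensional Euclidean space. -/
abbrev E3 := EuclideanSpace ℝ (Fin 3)

/-- The quadratic form `⟨A_c(x) v, v⟩` where
`A_c(x) = Id − (c²/(1+c²))·(x xᵀ)/|x|²`. -/
noncomputable def Acform (c : ℝ) (x v : E3) : ℝ :=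
  ‖v‖ ^ 2 - (c ^ 2 / (1 + c ^ 2)) * (inner ℝ x v : ℝ) ^ 2 / ‖x‖ ^ 2

/-- The matrix `A_c(x)` applied to a vector `v`. -/
noncomputable def Acmap (c : ℝ) (x v : E3) : E3 :=
  v - ((c ^ 2 / (1 + c ^ 2)) * (inner ℝ x v : ℝ) / ‖x‖ ^ 2) • x

/-- Divergence of a vector field on `ℝ³`. -/
noncomputable def divg (V : E3 → E3) (x : E3) : ℝ :=
  ∑ i : Fin 3, fderiv ℝ V x (EuclideanSpace.single i 1) i

/-- `u` is locally Lipschitz on `Ω`. -/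
def LocLip (Ω : Set E3) (u : E3 → ℝ) : Prop :=
  ∀ x ∈ Ω, ∃ K : NNReal, ∃ ε > (0 : ℝ), LipschitzOnWith K u (ball x ε ∩ Ω)

/-- The functional `J_c(u, Ω) = ∫_Ω ⟨A_c ∇u, ∇u⟩ + χ_{{u>0}}`. -/
noncomputable def J (c : ℝ) (u : E3 → ℝ) (Ω : Set E3) : ℝ :=
  ∫ x in Ω, (Acform c x (gradient u x) +
    Set.indicator {y : E3 | 0 < u y} (fun _ => (1 : ℝ)) x)

/-- `u` is a (nonnegative, locally Lipschitz) minimizer of `J_c` in `Ω`: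
it minimizes against all nonnegative locally Lipschitz competitors agreeing
with `u` outside a compactly contained open subset. -/
def IsMinimizer (c : ℝ) (Ω : Set E3) (u : E3 → ℝ) : Prop :=
  (∀ x ∈ Ω, 0 ≤ u x) ∧ LocLip Ω u ∧
  ∀ Ω' : Set E3, IsOpen Ω' → IsCompact (closure Ω') → closure Ω' ⊆ Ω →
    ∀ v : E3 → ℝ, (∀ x ∈ Ω, 0 ≤ v x) → LocLip Ω v →
      (∀ x ∈ Ω \ Ω', v x = u x) → J c u Ω' ≤ J c v Ω'

/-- Specification of the profile `f_{1,c}` and its first zero `φ₀`: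
`f` solves `f'' + (cos φ/sin φ) f' + (2/(1+c²)) f = 0` on `(0, π)`,
with `f(0) > 0`, `f'(0) = 0`, first zero `φ₀ ∈ [π/2, π)`, normalized so
that `|f'(φ₀)| = 1`. -/
def SymSpec (c : ℝ) (f : ℝ → ℝ) (φ₀ : ℝ) : Prop :=
  (∀ φ ∈ Ioo 0 π, DifferentiableAt ℝ f φ ∧ DifferentiableAt ℝ (deriv f) φ) ∧
  (∀ φ ∈ Ioo 0 π,
    deriv (deriv f) φ + (Real.cos φ / Real.sin φ) * deriv f φ
      + (2 / (1 + c ^ 2)) * f φ = 0) ∧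
  0 < f 0 ∧ deriv f 0 = 0 ∧
  φ₀ ∈ Ico (π / 2) π ∧ f φ₀ = 0 ∧ (∀ φ ∈ Ico 0 φ₀, 0 < f φ) ∧
  |deriv f φ₀| = 1

/-- The symmetric one-homogeneous solution `Φ_c` built from the profile `f`. -/
noncomputable def Phi (f : ℝ → ℝ) (x : E3) : ℝ :=
  ‖x‖ * max (f (Real.arccos (x 2 / ‖x‖))) 0

/-- The open circular cone `Γ = {x ≠ 0 : arccos(x₃/|x|) < φ₀}`. -/
def Gam (φ₀ : ℝ) : Set E3 :=
  {x : E3 | x ≠ 0 ∧ Real.arccos (x 2 / ‖x‖) < φ₀}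

/-- The lateral boundary cone `∂Γ = {x ≠ 0 : arccos(x₃/|x|) = φ₀}`. -/
def GamBdry (φ₀ : ℝ) : Set E3 :=
  {x : E3 | x ≠ 0 ∧ Real.arccos (x 2 / ‖x‖) = φ₀}

/-- The mean curvature `H_c(x) = |cos φ₀|/(|x| sin φ₀)` of the lateral cone. -/
noncomputable def Hc (φ₀ : ℝ) (x : E3) : ℝ :=
  |Real.cos φ₀| / (‖x‖ * Real.sin φ₀)

/-- Stability of the symmetric solution: the second variation inequality
`∫_{∂Γ} H F² dH² ≤ ∫_Γ ⟨A_c ∇F, ∇F⟩` for all `F ∈ C_c^∞(ℝ³ \ {0})`. -/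
def Stable (c φ₀ : ℝ) : Prop :=
  ∀ F : E3 → ℝ, ContDiff ℝ (⊤ : ℕ∞) F → HasCompactSupport F → (0 : E3) ∉ tsupport F →
    (∫ x in GamBdry φ₀, Hc φ₀ x * F x ^ 2 ∂(μH[2])) ≤
      ∫ x in Gam φ₀, Acform c x (gradient F x)

/-- `u` is a solution of the free boundary problem for parameter `c` on `Ω`:
nonnegative, continuous, `div(A_c ∇u) = 0` in `{u > 0}`, the free boundary is
locally a smooth surface away from the origin, and `⟨A_c ∇u, ∇u⟩ → 1` at free
boundary points other than the origin. -/
def IsFBSolution (c : ℝ) (Ω : Set E3) (u : E3 → ℝ) : Prop :=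
  (∀ x ∈ Ω, 0 ≤ u x) ∧ ContinuousOn u Ω ∧
  (∀ x ∈ Ω, 0 < u x →
    DifferentiableAt ℝ (fun y => Acmap c y (gradient u y)) x ∧
    divg (fun y => Acmap c y (gradient u y)) x = 0) ∧
  (∀ x ∈ Ω ∩ frontier {y : E3 | 0 < u y}, x ≠ 0 →
    ∃ ε > (0 : ℝ), ∃ g : E3 → ℝ, ContDiffOn ℝ (⊤ : ℕ∞) g (ball x ε) ∧
      (∀ y ∈ ball x ε, fderiv ℝ g y ≠ 0) ∧
      frontier {y : E3 | 0 < u y} ∩ ball x ε = {y ∈ ball x ε | g y = 0}) ∧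
  (∀ x ∈ Ω ∩ frontier {y : E3 | 0 < u y}, x ≠ 0 →
    Filter.Tendsto (fun y => Acform c y (gradient u y))
      (nhdsWithin x {y : E3 | 0 < u y}) (nhds 1))

/-- The Weiss functional
`W(r,u) = r⁻³ ∫_{B_r} (⟨A_c∇u,∇u⟩ + χ_{{u>0}}) − r⁻⁴ ∫_{∂B_r} u² dH²`. -/
noncomputable def Weiss (c : ℝ) (u : E3 → ℝ) (r : ℝ) : ℝ :=
  (1 / r ^ 3) * (∫ x in ball (0 : E3) r,
      (Acform c x (gradient u x) +
        Set.indicator {y : E3 | 0 < u y} (fun _ => (1 : ℝ)) x)) -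
  (1 / r ^ 4) * ∫ x in sphere (0 : E3) r, u x ^ 2 ∂(μH[2])

/-- Specification of the comparison profile `g` with `β = −1/2`:
`g'' + (cos φ/sin φ) g' − (1/(4(1+c²))) g = 0` on `(0,π)`, `g'(0) = 0`,
`g > 0` and `g' ≥ 0` on `[0, π)`. -/
def GSpec (c : ℝ) (g : ℝ → ℝ) : Prop :=
  (∀ φ ∈ Ioo 0 π, DifferentiableAt ℝ g φ ∧ DifferentiableAt ℝ (deriv g) φ) ∧
  (∀ φ ∈ Ioo 0 π,
    deriv (deriv g) φ + (Real.cos φ / Real.sin φ) * deriv g φ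
      - (1 / (4 * (1 + c ^ 2))) * g φ = 0) ∧
  deriv g 0 = 0 ∧ (∀ φ ∈ Ico 0 π, 0 < g φ) ∧ (∀ φ ∈ Ico 0 π, 0 ≤ deriv g φ)

/-- The domain `U = {x : |x| < 1, x₃ > cos φ₂}`. -/
def Ud (φ₂ : ℝ) : Set E3 :=
  {x : E3 | ‖x‖ < 1 ∧ Real.cos φ₂ < x 2}

end

set_option maxHeartbeats 1000000 in
/-- for a `C²` function on `ℝ³\{0}` homogeneous of degree `0`, the
squared Frobenius norm of the Hessian dominates `2|∇u|²` on the unit sphere. -/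
theorem stmt13 (u : E3 → ℝ) (hreg : ContDiffOn ℝ 2 u {x : E3 | x ≠ 0})
    (hhom : ∀ t : ℝ, 0 < t → ∀ x : E3, x ≠ 0 → u (t • x) = u x) :
    ∀ x : E3, ‖x‖ = 1 →
      2 * ‖gradient u x‖ ^ 2 ≤
        ∑ i : Fin 3, ∑ j : Fin 3,
          (fderiv ℝ (fun y => fderiv ℝ u y (EuclideanSpace.single j 1)) x
            (EuclideanSpace.single i 1)) ^ 2 := by
  intro x hx
  have hx0 : x ≠ 0 := by
    intro h; rw [h, norm_zero] at hx; exact one_ne_zero hx.symm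
  have hopen : IsOpen {y : E3 | y ≠ 0} := isOpen_compl_singleton
  have hmem : {y : E3 | y ≠ 0} ∈ nhds x := hopen.mem_nhds hx0
  have hCA : ContDiffAt ℝ 2 u x := hreg.contDiffAt hmem
  have hdiff : ∀ y : E3, y ≠ 0 → DifferentiableAt ℝ u y := fun y hy =>
    (hreg.contDiffAt (hopen.mem_nhds hy)).differentiableAt (by norm_num)
  have hd2 : DifferentiableAt ℝ (fderiv ℝ u) x :=
    (hCA.fderiv_right (m := 1) (by norm_num)).differentiableAt (by norm_num)
  set B := fderiv ℝ (fderiv ℝ u) x with hBdef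
  have hHB : ∀ v w : E3, fderiv ℝ (fun y => fderiv ℝ u y w) x v = B v w := by
    intro v w
    rw [fderiv_clm_apply hd2 (differentiableAt_const w)]
    simp [hBdef]
  have hsym : ∀ v w : E3, B v w = B w v := hCA.isSymmSndFDerivAt (by norm_num)
  have hcurve : HasDerivAt (fun t : ℝ => t • x) x 1 := by
    simpa using (hasDerivAt_id (1:ℝ)).smul_const x
  -- Euler relation
  have heuler : fderiv ℝ u x x = 0 := by
    have hfx : HasFDerivAt u (fderiv ℝ u x) ((1:ℝ) • x) := by
      rw [one_smul]; exact (hdiff x hx0).hasFDerivAt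
    have h1 : HasDerivAt (fun t : ℝ => u (t • x)) (fderiv ℝ u x x) 1 :=
      hfx.comp_hasDerivAt 1 hcurve
    have h2 : HasDerivAt (fun t : ℝ => u (t • x)) 0 1 := by
      have heq : (fun t : ℝ => u (t • x)) =ᶠ[nhds (1:ℝ)] fun _ => u x := by
        filter_upwards [eventually_gt_nhds zero_lt_one] with t ht
        exact hhom t ht x hx0
      exact (hasDerivAt_const 1 (u x)).congr_of_eventuallyEq heq
    exact h1.unique h2
  -- scaling of the differential
  have hscale : ∀ t : ℝ, 0 < t → ∀ v : E3,
      fderiv ℝ u x v = t * fderiv ℝ u (t • x) v := by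
    intro t ht v
    have htx : t • x ≠ 0 := smul_ne_zero (ne_of_gt ht) hx0
    have L : HasFDerivAt (fun y : E3 => t • y)
        (t • ContinuousLinearMap.id ℝ E3) x := by
      have := (t • ContinuousLinearMap.id ℝ E3).hasFDerivAt (x := x)
      exact this
    have comp : HasFDerivAt (fun y => u (t • y))
        ((fderiv ℝ u (t • x)).comp (t • ContinuousLinearMap.id ℝ E3)) x :=
      (hdiff _ htx).hasFDerivAt.comp x L
    have heq : (fun y : E3 => u (t • y)) =ᶠ[nhds x] u := by
      filter_upwards [hmem] with y hy; exact hhom t ht y hy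
    have hfd : fderiv ℝ u x
        = (fderiv ℝ u (t • x)).comp (t • ContinuousLinearMap.id ℝ E3) :=
      ((comp.congr_of_eventuallyEq heq.symm).fderiv)
    rw [hfd]
    simp [mul_comm]
  -- second-order relation B x v = - fderiv u x v
  have hBx : ∀ v : E3, B x v = -(fderiv ℝ u x v) := by
    intro v
    have hdv : DifferentiableAt ℝ (fun y => fderiv ℝ u y v) x :=
      hd2.clm_apply (differentiableAt_const v)
    have hfv : HasFDerivAt (fun y => fderiv ℝ u y v)
        (fderiv ℝ (fun y => fderiv ℝ u y v) x) ((1:ℝ) • x) := by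
      rw [one_smul]; exact hdv.hasFDerivAt
    have h1 : HasDerivAt (fun t : ℝ => fderiv ℝ u (t • x) v) (B x v) 1 := by
      have := hfv.comp_hasDerivAt 1 hcurve
      rwa [hHB x v] at this
    have h2 : HasDerivAt (fun t : ℝ => fderiv ℝ u (t • x) v)
        (-(fderiv ℝ u x v)) 1 := by
      have heq : (fun t : ℝ => fderiv ℝ u (t • x) v)
          =ᶠ[nhds (1:ℝ)] fun t => t⁻¹ * fderiv ℝ u x v := by
        filter_upwards [eventually_gt_nhds zero_lt_one] with t ht
        have h := hscale t ht v
        field_simp [ne_of_gt ht] at h ⊢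
        linarith
      have hder : HasDerivAt (fun t : ℝ => t⁻¹ * fderiv ℝ u x v)
          (-(fderiv ℝ u x v)) 1 := by
        simpa using (hasDerivAt_inv one_ne_zero).mul_const (fderiv ℝ u x v)
      exact hder.congr_of_eventuallyEq heq
    exact h1.unique h2
  -- coordinates
  have hdecomp : ∀ v : E3, ∑ i : Fin 3, v i • EuclideanSpace.single i (1:ℝ) = v := by
    intro v
    have h := (EuclideanSpace.basisFun (Fin 3) ℝ).sum_repr' v
    simpa [EuclideanSpace.basisFun_apply, EuclideanSpace.inner_single_left] using h
  set g : Fin 3 → ℝ := fun i => fderiv ℝ u x (EuclideanSpace.single i 1) with hgdef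
  set b : Fin 3 → Fin 3 → ℝ :=
    fun i j => B (EuclideanSpace.single i 1) (EuclideanSpace.single j 1) with hbdef
  have happly : ∀ (L : E3 →L[ℝ] ℝ) (v : E3),
      L v = ∑ i : Fin 3, v i * L (EuclideanSpace.single i 1) := by
    intro L v
    conv_lhs => rw [← hdecomp v]
    rw [map_sum]
    simp
  have e1 : ∑ i : Fin 3, x i * g i = 0 := by
    rw [hgdef]
    simp only
    rw [← happly (fderiv ℝ u x) x]
    exact heuler
  have hrow : ∀ j, ∑ i : Fin 3, x i * b i j = -(g j) := by
    intro j
    have h := hBx (EuclideanSpace.single j 1)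
    have hBexp : B x (EuclideanSpace.single j 1)
        = ∑ i : Fin 3, x i * b i j := by
      conv_lhs => rw [← hdecomp x]
      rw [map_sum, ContinuousLinearMap.sum_apply]
      simp [hbdef]
    rw [← hBexp, h]
  have hcol : ∀ i, ∑ j : Fin 3, x j * b i j = -(g i) := by
    intro i
    have h1 : B (EuclideanSpace.single i 1) x = -(g i) := by
      rw [hsym, hBx]
    rw [← h1, happly (B (EuclideanSpace.single i 1)) x]
  have hxn : ∑ i : Fin 3, x i ^ 2 = 1 := by
    have h : ‖x‖ ^ 2 = ∑ i : Fin 3, x i ^ 2 := by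
      rw [EuclideanSpace.norm_eq, Real.sq_sqrt (by positivity)]
      simp [Real.norm_eq_abs, sq_abs]
    rw [← h, hx]; norm_num
  have hgi : ∀ i, gradient u x i = g i := by
    intro i
    have h : (inner ℝ (gradient u x) (EuclideanSpace.single i (1:ℝ)) : ℝ)
        = fderiv ℝ u x (EuclideanSpace.single i 1) := by
      rw [gradient]; exact InnerProductSpace.toDual_symm_apply
    rw [EuclideanSpace.inner_single_right] at h; simpa using h
  have hgn : ‖gradient u x‖ ^ 2 = ∑ i : Fin 3, g i ^ 2 := by
    rw [EuclideanSpace.norm_eq, Real.sq_sqrt (by positivity)]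
    simp [Real.norm_eq_abs, sq_abs, hgi]
  -- rewrite the goal
  have hgoal : ∀ i j : Fin 3,
      fderiv ℝ (fun y => fderiv ℝ u y (EuclideanSpace.single j 1)) x
        (EuclideanSpace.single i 1) = b i j := fun i j =>
    hHB (EuclideanSpace.single i 1) (EuclideanSpace.single j 1)
  simp only [hgoal, hgn]
  -- pure algebra
  have hr0 := hrow 0; have hr1 := hrow 1; have hr2 := hrow 2
  have hc0 := hcol 0; have hc1 := hcol 1; have hc2 := hcol 2
  simp only [Fin.sum_univ_three] at hr0 hr1 hr2 hc0 hc1 hc2 e1 hxn ⊢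
  have key : b 0 0 ^ 2 + b 0 1 ^ 2 + b 0 2 ^ 2 + b 1 0 ^ 2 + b 1 1 ^ 2 + b 1 2 ^ 2
      + b 2 0 ^ 2 + b 2 1 ^ 2 + b 2 2 ^ 2
      = (b 0 0 + x 0 * g 0 + x 0 * g 0) ^ 2 + (b 0 1 + x 0 * g 1 + x 1 * g 0) ^ 2
        + (b 0 2 + x 0 * g 2 + x 2 * g 0) ^ 2 + (b 1 0 + x 1 * g 0 + x 0 * g 1) ^ 2
        + (b 1 1 + x 1 * g 1 + x 1 * g 1) ^ 2 + (b 1 2 + x 1 * g 2 + x 2 * g 1) ^ 2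
        + (b 2 0 + x 2 * g 0 + x 0 * g 2) ^ 2 + (b 2 1 + x 2 * g 1 + x 1 * g 2) ^ 2
        + (b 2 2 + x 2 * g 2 + x 2 * g 2) ^ 2
        + 2 * (g 0 ^ 2 + g 1 ^ 2 + g 2 ^ 2) := by
    linear_combination (-2 * g 0) * hr0 + (-2 * g 1) * hr1 + (-2 * g 2) * hr2
      + (-2 * g 0) * hc0 + (-2 * g 1) * hc1 + (-2 * g 2) * hc2
      + (-2 * (g 0 ^ 2 + g 1 ^ 2 + g 2 ^ 2)) * hxn
      + (-2 * (x 0 * g 0 + x 1 * g 1 + x 2 * g 2)) * e1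
  linarith [key, sq_nonneg (b 0 0 + x 0 * g 0 + x 0 * g 0),
    sq_nonneg (b 0 1 + x 0 * g 1 + x 1 * g 0),
    sq_nonneg (b 0 2 + x 0 * g 2 + x 2 * g 0),
    sq_nonneg (b 1 0 + x 1 * g 0 + x 0 * g 1),
    sq_nonneg (b 1 1 + x 1 * g 1 + x 1 * g 1),
    sq_nonneg (b 1 2 + x 1 * g 2 + x 2 * g 1),
    sq_nonneg (b 2 0 + x 2 * g 0 + x 0 * g 2),
    sq_nonneg (b 2 1 + x 2 * g 1 + x 1 * g 2),
    sq_nonneg (b 2 2 + x 2 * g 2 + x 2 * g 2)]
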